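/- With F and q as above, let Φ(β,h,p) = F(β,h,q(β),p) where q(β) solves the fixed point equation q = E[tanh²(β(p/2)^{1/2} q^{(p−1)/2} Y + h)] smoothly in β. Then ∂Φ/∂β(β,h,p) = (β/2)(1 − q^p). -/

import Mathlib

/-!
Write `Φ(β) = F(β, q(β))`. Through the amplitude `a(β) = β √(p/2) q(β)^((p-1)/2)`, the chain rule
gives `Φ' = ∂_β F + ∂_q F · q'`. Differentiating `E[log cosh(aY + h)]` in `a` gives
`E[Y tanh(aY + h)]`, and Gaussian integration by parts turns this into
`a (1 - E[tanh²(aY + h)]) = a (1 - q)` by the fixed-point equation. Hence `∂_q F = 0`, and what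
remains, `∂_β F`, is `(β/2)(1 - q^p)`. Since `h ≠ 0`, the fixed-point equation forces `q(β) > 0`,
so `q ↦ q^((p-1)/2)` is differentiable there.
-/

open MeasureTheory ProbabilityTheory Real
open scoped NNReal

lemma integrable_gaussianReal_iff {E : Type*} [NormedAddCommGroup E] [NormedSpace ℝ E]
    {μ : ℝ} {v : ℝ≥0} {f : ℝ → E} (hv : v ≠ 0) :
    Integrable f (gaussianReal μ v) ↔ Integrable (fun x ↦ gaussianPDFReal μ v x • f x) := by
  rw [gaussianReal_of_var_ne_zero μ hv, integrable_withDensity_iff_integrable_smul'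
    (measurable_gaussianPDF μ v) (ae_of_all _ fun _ ↦ gaussianPDF_lt_top)]
  simp only [gaussianPDF_def, ENNReal.toReal_ofReal (gaussianPDFReal_nonneg _ _ _)]

lemma hasDerivAt_gaussianPDFReal (μ : ℝ) {v : ℝ≥0} (hv : v ≠ 0) (x : ℝ) :
    HasDerivAt (gaussianPDFReal μ v) (-((x - μ) / v) * gaussianPDFReal μ v x) x := by
  have h := ((((hasDerivAt_id x).sub_const μ).pow 2).neg.div_const (2 * (v : ℝ))).exp.const_mul
    (√(2 * π * v))⁻¹
  rw [gaussianPDFReal_def]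
  refine h.congr_deriv ?_
  have hv' : (v : ℝ) ≠ 0 := by exact_mod_cast hv
  simp only [Pi.neg_apply, Pi.pow_apply, id]
  field_simp
  ring

theorem integral_sub_mul_eq_integral_deriv_gaussianReal {μ : ℝ} {v : ℝ≥0} (hv : v ≠ 0)
    {f f' : ℝ → ℝ} (hf : ∀ x, HasDerivAt f (f' x) x) {C : ℝ} (hfC : ∀ x, |f x| ≤ C)
    (hf' : Integrable f' (gaussianReal μ v)) :
    ∫ x, (x - μ) * f x ∂gaussianReal μ v = v * ∫ x, f' x ∂gaussianReal μ v := by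
  set φ := gaussianPDFReal μ v
  have hv' : (v : ℝ) ≠ 0 := by exact_mod_cast hv
  have hf_meas : AEStronglyMeasurable f (gaussianReal μ v) :=
    (continuous_iff_continuousAt.2 fun x ↦ (hf x).continuousAt).aestronglyMeasurable
  have hf_mul : ∀ {g : ℝ → ℝ}, Integrable g (gaussianReal μ v) →
      Integrable (fun x ↦ f x * g x) (gaussianReal μ v) :=
    fun hg ↦ hg.bdd_mul hf_meas (ae_of_all _ hfC)
  have hsub : Integrable (fun x ↦ x - μ) (gaussianReal μ v) :=
    ((memLp_id_gaussianReal 1).integrable le_rfl).sub (integrable_const μ)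
  have hibp := integral_mul_deriv_eq_deriv_mul_of_integrable (u := f) (v := φ)
    (fun x _ ↦ hf x) (fun x _ ↦ hasDerivAt_gaussianPDFReal μ hv x) ?_ ?_ ?_
  · have hlhs : ∫ x, φ x • ((x - μ) * f x) = -v * ∫ x, f x * (-((x - μ) / v) * φ x) := by
      rw [← integral_const_mul]
      congr 1 with x
      field_simp
      simp only [smul_eq_mul]
      ring
    have hrhs : ∫ x, φ x • f' x = ∫ x, f' x * φ x := by
      simp only [smul_eq_mul, mul_comm]
    rw [integral_gaussianReal_eq_integral_smul hv, integral_gaussianReal_eq_integral_smul hv,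
      hlhs, hrhs, hibp]
    ring
  · have := ((integrable_gaussianReal_iff hv).1 (hf_mul hsub)).const_mul (-(v : ℝ)⁻¹)
    refine this.congr (ae_of_all _ fun x ↦ ?_)
    simp only [smul_eq_mul, Pi.mul_apply]
    ring
  · have := (integrable_gaussianReal_iff hv).1 hf'
    refine this.congr (ae_of_all _ fun x ↦ ?_)
    simp only [smul_eq_mul, Pi.mul_apply]
    ring
  · have := (integrable_gaussianReal_iff hv).1 (hf_mul (integrable_const 1))
    refine this.congr (ae_of_all _ fun x ↦ ?_)
    simp only [smul_eq_mul, Pi.mul_apply]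
    ring

lemma Real.hasDerivAt_tanh (x : ℝ) : HasDerivAt tanh (1 - tanh x ^ 2) x := by
  have h := (hasDerivAt_sinh x).div (hasDerivAt_cosh x) (cosh_pos x).ne'
  rw [show tanh = fun y ↦ sinh y / cosh y from funext tanh_eq_sinh_div_cosh]
  refine h.congr_deriv ?_
  have hcosh := (cosh_pos x).ne'
  dsimp only
  field_simp

lemma Real.continuous_tanh : Continuous tanh :=
  continuous_iff_continuousAt.2 fun x ↦ (hasDerivAt_tanh x).continuousAt

lemma Real.hasDerivAt_log_cosh (x : ℝ) : HasDerivAt (fun t ↦ log (cosh t)) (tanh x) x := by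
  simpa [← tanh_eq_sinh_div_cosh] using (hasDerivAt_cosh x).log (cosh_pos x).ne'

lemma Real.abs_log_cosh_le_abs (x : ℝ) : |log (cosh x)| ≤ |x| := by
  rw [abs_of_nonneg (log_nonneg (one_le_cosh x)), ← cosh_abs,
    log_le_iff_le_exp (cosh_pos _), cosh_eq]
  linarith [exp_le_exp.2 (neg_le_self (abs_nonneg x))]

lemma hasDerivAt_integral_log_cosh_mul_add {μ : Measure ℝ} [IsFiniteMeasure μ]
    (hμ : Integrable (fun y ↦ y) μ) (a c : ℝ) :
    HasDerivAt (fun t ↦ ∫ y, log (cosh (t * y + c)) ∂μ) (∫ y, y * tanh (a * y + c) ∂μ) a := by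
  have hmeas : ∀ t, AEStronglyMeasurable (fun y ↦ log (cosh (t * y + c))) μ := fun t ↦
    (by fun_prop : Measurable fun y ↦ log (cosh (t * y + c))).aestronglyMeasurable
  refine (hasDerivAt_integral_of_dominated_loc_of_deriv_le (bound := fun y ↦ |y|)
    (F' := fun t y ↦ y * tanh (t * y + c)) Filter.univ_mem (Filter.Eventually.of_forall hmeas) ?_
    (continuous_id.mul (continuous_tanh.comp (by fun_prop))).aestronglyMeasurable ?_ hμ.abs ?_).2
  · refine ((hμ.abs.const_mul |a|).add (integrable_const |c|)).mono' (hmeas a)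
      (ae_of_all _ fun y ↦ ?_)
    calc ‖log (cosh (a * y + c))‖ ≤ |a * y + c| := abs_log_cosh_le_abs _
      _ ≤ |a| * |y| + |c| := by rw [← abs_mul]; exact abs_add_le _ _
  · refine ae_of_all _ fun y t _ ↦ ?_
    rw [norm_mul, Real.norm_eq_abs]
    exact mul_le_of_le_one_right (abs_nonneg y) (abs_tanh_lt_one _).le
  · refine ae_of_all _ fun y t _ ↦ ?_
    have := (hasDerivAt_log_cosh (t * y + c)).comp t ((hasDerivAt_mul_const y).add_const c)
    exact this.congr_deriv (mul_comm _ _)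

lemma integrable_tanh_sq_mul_add_gaussianReal (a c : ℝ) :
    Integrable (fun y ↦ tanh (a * y + c) ^ 2) (gaussianReal 0 1) :=
  Integrable.of_bound ((continuous_tanh.comp (by fun_prop)).pow 2).aestronglyMeasurable 1
    (ae_of_all _ fun y ↦ by simpa using (tanh_sq_lt_one (a * y + c)).le)

lemma integral_mul_tanh_mul_add_gaussianReal (a c : ℝ) :
    ∫ y, y * tanh (a * y + c) ∂gaussianReal 0 1 =
      a * (1 - ∫ y, tanh (a * y + c) ^ 2 ∂gaussianReal 0 1) := by
  have hderiv : ∀ y, HasDerivAt (fun y ↦ tanh (a * y + c)) (a * (1 - tanh (a * y + c) ^ 2)) y :=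
    fun y ↦ ((hasDerivAt_tanh _).comp y ((hasDerivAt_id y).const_mul a |>.add_const c)).congr_deriv
      (by simp [mul_comm])
  have hint := integrable_tanh_sq_mul_add_gaussianReal a c
  have := integral_sub_mul_eq_integral_deriv_gaussianReal one_ne_zero hderiv
    (fun y ↦ (abs_tanh_lt_one _).le) (((integrable_const 1).sub hint).const_mul a)
  simpa [integral_const_mul, integral_sub (integrable_const 1) hint] using this

lemma hasDerivAt_integral_log_cosh_gaussianReal (a c : ℝ) :
    HasDerivAt (fun t ↦ ∫ y, log (cosh (t * y + c)) ∂gaussianReal 0 1)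
      (a * (1 - ∫ y, tanh (a * y + c) ^ 2 ∂gaussianReal 0 1)) a :=
  integral_mul_tanh_mul_add_gaussianReal a c ▸
    hasDerivAt_integral_log_cosh_mul_add ((memLp_id_gaussianReal 1).integrable le_rfl) a c

lemma pos_of_eq_integral_tanh_sq {Q k e h : ℝ} (he : e ≠ 0) (hh : h ≠ 0)
    (hQ : Q = ∫ y, tanh (k * Q ^ e * y + h) ^ 2 ∂gaussianReal 0 1) : 0 < Q := by
  refine (hQ ▸ integral_nonneg fun y ↦ sq_nonneg _ : 0 ≤ Q).lt_of_ne fun hQ0 ↦ ?_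
  rw [← hQ0, zero_rpow he] at hQ
  simp only [mul_zero, zero_mul, zero_add, integral_const, probReal_univ, one_smul] at hQ
  rw [tanh_eq_sinh_div_cosh] at hQ
  exact div_ne_zero (sinh_ne_zero.2 hh) (cosh_pos h).ne' (pow_eq_zero_iff two_ne_zero |>.1 hQ.symm)

theorem stmt_18_general (p : ℕ) (hp : 2 ≤ p) (h : ℝ) (hh : 0 < h) (q : ℝ → ℝ) (β : ℝ)
    (hqd : DifferentiableAt ℝ q β)
    (hfix : ∀ b : ℝ, q b =
      ∫ y, Real.tanh (b * Real.sqrt ((p : ℝ) / 2) * (q b) ^ (((p : ℝ) - 1) / 2) * y + h) ^ 2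
        ∂(gaussianReal 0 1)) :
    HasDerivAt (fun b : ℝ =>
      b ^ 2 / 4 * (1 - (p : ℝ) * (q b) ^ (p - 1) + ((p : ℝ) - 1) * (q b) ^ p) + Real.log 2
        + ∫ y, Real.log
            (Real.cosh (b * Real.sqrt ((p : ℝ) / 2) * (q b) ^ (((p : ℝ) - 1) / 2) * y + h))
            ∂(gaussianReal 0 1))
      (β / 2 * (1 - (q β) ^ p)) β := by
  obtain ⟨n, rfl⟩ : ∃ n, p = n + 2 := ⟨p - 2, by omega⟩
  set s := √(((n + 2 : ℕ) : ℝ) / 2)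
  set e := (((n + 2 : ℕ) : ℝ) - 1) / 2 with he
  have hq := hqd.hasDerivAt
  have he0 : 0 < e := by rw [he]; push_cast; linarith [(n.cast_nonneg : (0 : ℝ) ≤ n)]
  have hQ : 0 < q β := pos_of_eq_integral_tanh_sq he0.ne' hh.ne' (hfix β)
  have hamp := (hasDerivAt_mul_const s).mul (hq.rpow_const (p := e) (Or.inl hQ.ne'))
  have hG := (hasDerivAt_integral_log_cosh_gaussianReal (β * s * q β ^ e) h).comp β hamp
  rw [← hfix β] at hG
  have hP := (((hasDerivAt_pow 2 β).div_const 4).mul (((hq.pow (n + 1)).const_mul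
    ((n + 2 : ℕ) : ℝ)).const_sub 1 |>.add ((hq.pow (n + 2)).const_mul (((n + 2 : ℕ) : ℝ) - 1))))
  refine ((hP.add_const (log 2)).add hG).congr_deriv ?_
  have hss : s * s = ((n + 2 : ℕ) : ℝ) / 2 := mul_self_sqrt (by positivity)
  have hee : q β ^ e * q β ^ e = q β ^ (n + 1) := by
    rw [← rpow_add hQ, ← rpow_natCast, he]; push_cast; ring_nf
  have hee' : q β ^ e * q β ^ (e - 1) = q β ^ n := by
    rw [← rpow_add hQ, ← rpow_natCast, he]; push_cast; ring_nf
  simp only [Pi.add_apply, Pi.pow_apply, Nat.add_sub_cancel]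
  push_cast at hss hee hee' he ⊢
  clear_value s e
  -- the `deriv q β` terms cancel: this is the stationarity `∂F/∂q = 0` at the fixed point
  linear_combination (1 - q β) * (β * (q β ^ e * q β ^ e)
      + β ^ 2 * deriv q β * e * (q β ^ e * q β ^ (e - 1))) * hss
    + (1 - q β) * β * ((n + 2) / 2) * hee
    + (1 - q β) * β ^ 2 * deriv q β * ((n + 2) / 2) * (q β ^ e * q β ^ (e - 1)) * he
    + (1 - q β) * β ^ 2 * deriv q β * ((n + 2) / 2) * ((n + 1) / 2) * hee'

theorem stmt_18 (p : ℕ) (hp : 2 ≤ p) (h : ℝ) (hh : 0 < h) (q : ℝ → ℝ) (β : ℝ) (hβ : 0 < β)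
    (hq01 : ∀ b, q b ∈ Set.Icc (0 : ℝ) 1)
    (hqd : DifferentiableAt ℝ q β)
    (hfix : ∀ b : ℝ, q b =
      ∫ y, Real.tanh (b * Real.sqrt ((p : ℝ) / 2) * (q b) ^ (((p : ℝ) - 1) / 2) * y + h) ^ 2
        ∂(gaussianReal 0 1)) :
    HasDerivAt (fun b : ℝ =>
      b ^ 2 / 4 * (1 - (p : ℝ) * (q b) ^ (p - 1) + ((p : ℝ) - 1) * (q b) ^ p) + Real.log 2
        + ∫ y, Real.log
            (Real.cosh (b * Real.sqrt ((p : ℝ) / 2) * (q b) ^ (((p : ℝ) - 1) / 2) * y + h))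
            ∂(gaussianReal 0 1))
      (β / 2 * (1 - (q β) ^ p)) β :=
  stmt_18_general p hp h hh q β hqd hfix
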